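/- arXiv:1308.5000 — 2 statements merged into one kernel-verified Lean document; each statement's English description precedes it below -/
import Mathlib

section
/- (Cone constraint.) Let A ∈ ℝ^{m×n}, let D ∈ ℝ^{n×p} be a tight frame (DDᵀ = Iₙ), λ > 0, ρ > 0, x ∈ ℝⁿ, and b = Ax + w with noise w ∈ ℝᵐ satisfying ‖DᵀAᵀw‖_∞ ≤ λ/2. Let (x̂_ρ, ẑ_ρ) be a minimizer of the RALASSO problem min_{x∈ℝⁿ, z∈ℝᵖ} (1/2)‖Ax − b‖₂² + λ‖z‖₁ + (ρ/2)‖z − Dᵀx‖₂², and set h = x̂_ρ − x. Then for any index set T ⊆ {1,…,p}: ‖Dᵀ_{T^c}h‖₁ ≤ (λ/ρ)·p + 3‖Dᵀ_T h‖₁ + 4‖Dᵀ_{T^c}x‖₁. -/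
open scoped BigOperators

/-- Euclidean (ℓ₂) norm of a vector in ℝᵏ. -/
noncomputable def l2norm {k : ℕ} (v : Fin k → ℝ) : ℝ := Real.sqrt (∑ i, (v i) ^ 2)

/-- ℓ₁ norm of a vector in ℝᵏ. -/
noncomputable def l1norm {k : ℕ} (v : Fin k → ℝ) : ℝ := ∑ i, |v i|

/-- ℓ∞ norm of a vector in ℝᵏ. -/
noncomputable def linfnorm {k : ℕ} (v : Fin k → ℝ) : ℝ := ⨆ i, |v i|

/-- The vector equal to `v` on coordinates in `S` and zero elsewhere. -/
def restr {k : ℕ} (S : Finset (Fin k)) (v : Fin k → ℝ) : Fin k → ℝ :=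
  fun i => if i ∈ S then v i else 0

open Matrix

lemma sq_l2norm {k : ℕ} (v : Fin k → ℝ) : (l2norm v) ^ 2 = ∑ i, (v i) ^ 2 := by
  rw [l2norm, Real.sq_sqrt]; positivity

lemma l1norm_restr {k : ℕ} (S : Finset (Fin k)) (v : Fin k → ℝ) :
    l1norm (restr S v) = ∑ i ∈ S, |v i| := by
  unfold l1norm restr
  rw [show (∑ i, |if i ∈ S then v i else 0|) = ∑ i, if i ∈ S then |v i| else 0 from
    Finset.sum_congr rfl fun i _ => by split <;> simp]
  simp [Finset.sum_ite_mem]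

/-- cone constraint: with `D` a tight frame, `b = Ax + w`,
`‖DᵀAᵀw‖_∞ ≤ λ/2`, and `(x̂_ρ, ẑ_ρ)` a RALASSO minimizer, the error `h = x̂_ρ − x`
satisfies `‖Dᵀ_{T^c}h‖₁ ≤ (λ/ρ)p + 3‖Dᵀ_T h‖₁ + 4‖Dᵀ_{T^c}x‖₁` for every `T`. -/
theorem ralasso_cone_constraint
    {m n p : ℕ} (A : Matrix (Fin m) (Fin n) ℝ) (D : Matrix (Fin n) (Fin p) ℝ)
    (htf : D * D.transpose = 1)
    (lam ρ : ℝ) (hlam : 0 < lam) (hρ : 0 < ρ)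
    (x : Fin n → ℝ) (w b : Fin m → ℝ) (hb : b = A.mulVec x + w)
    (hw : linfnorm (D.transpose.mulVec (A.transpose.mulVec w)) ≤ lam / 2)
    (xh : Fin n → ℝ) (zh : Fin p → ℝ)
    (hmin : ∀ (y : Fin n → ℝ) (z : Fin p → ℝ),
      1 / 2 * (l2norm (A.mulVec xh - b)) ^ 2 + lam * l1norm zh
          + ρ / 2 * (l2norm (zh - D.transpose.mulVec xh)) ^ 2
        ≤ 1 / 2 * (l2norm (A.mulVec y - b)) ^ 2 + lam * l1norm z
          + ρ / 2 * (l2norm (z - D.transpose.mulVec y)) ^ 2)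
    (T : Finset (Fin p)) :
    l1norm (restr Tᶜ (D.transpose.mulVec (xh - x)))
      ≤ lam / ρ * p + 3 * l1norm (restr T (D.transpose.mulVec (xh - x)))
        + 4 * l1norm (restr Tᶜ (D.transpose.mulVec x)) := by
  classical
  set h : Fin n → ℝ := xh - x with hh
  set v : Fin p → ℝ := D.transpose.mulVec h with hv
  set a : Fin p → ℝ := D.transpose.mulVec x with ha
  set u : Fin p → ℝ := D.transpose.mulVec xh with hu
  set g : Fin p → ℝ := D.transpose.mulVec (A.transpose.mulVec w) with hg
  set Ah : Fin m → ℝ := A.mulVec h with hAh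
  -- basic vector identities
  have huv : ∀ i, u i = a i + v i := by
    intro i
    have : v = u - a := by rw [hv, hu, ha, hh, Matrix.mulVec_sub]
    rw [this]; simp
  have hAxb : A.mulVec x - b = -w := by rw [hb]; abel
  have hAxhb : A.mulVec xh - b = Ah - w := by
    rw [hAh, hh, Matrix.mulVec_sub, hb]; abel
  -- the optimality inequality at (x, Dᵀx)
  have key := hmin x (D.transpose.mulVec x)
  rw [hAxb, hAxhb, sub_self] at key
  rw [sq_l2norm, sq_l2norm, sq_l2norm, sq_l2norm] at key
  simp only [Pi.sub_apply, Pi.neg_apply, Pi.zero_apply, neg_sq, l1norm] at key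
  -- expand the square
  have expand : ∑ i, (Ah i - w i) ^ 2
      = ∑ i, (Ah i) ^ 2 - 2 * ∑ i, Ah i * w i + ∑ i, (w i) ^ 2 := by
    rw [Finset.mul_sum, ← Finset.sum_sub_distrib, ← Finset.sum_add_distrib]
    exact Finset.sum_congr rfl fun i _ => by ring
  -- dot product identity
  have dotid : Ah ⬝ᵥ w = v ⬝ᵥ g := by
    have e2 : h = D *ᵥ (Dᵀ *ᵥ h) := by
      rw [Matrix.mulVec_mulVec, htf, Matrix.one_mulVec]
    calc Ah ⬝ᵥ w = (Aᵀ *ᵥ w) ⬝ᵥ h := by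
          rw [hAh, dotProduct_comm, Matrix.dotProduct_mulVec, Matrix.mulVec_transpose]
      _ = (Aᵀ *ᵥ w) ⬝ᵥ (D *ᵥ (Dᵀ *ᵥ h)) := by rw [← e2]
      _ = ((Aᵀ *ᵥ w) ᵥ* D) ⬝ᵥ (Dᵀ *ᵥ h) := Matrix.dotProduct_mulVec _ _ _
      _ = (Dᵀ *ᵥ (Aᵀ *ᵥ w)) ⬝ᵥ (Dᵀ *ᵥ h) := by
          rw [Matrix.mulVec_transpose D (Aᵀ *ᵥ w)]
      _ = v ⬝ᵥ g := by rw [hv, hg, dotProduct_comm]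
  have hgi : ∀ i, |g i| ≤ lam / 2 := by
    intro i
    have hb : |g i| ≤ linfnorm g := by
      rw [linfnorm]
      exact le_ciSup (Set.Finite.bddAbove (Set.finite_range fun j => |g j|)) i
    linarith
  have dotbound : Ah ⬝ᵥ w ≤ (∑ i, |v i|) * (lam / 2) := by
    rw [dotid, dotProduct, Finset.sum_mul]
    refine Finset.sum_le_sum fun i _ => ?_
    calc v i * g i ≤ |v i * g i| := le_abs_self _
      _ = |v i| * |g i| := abs_mul _ _
      _ ≤ |v i| * (lam / 2) := mul_le_mul_of_nonneg_left (hgi i) (abs_nonneg _)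
  -- per-coordinate quadratic bound
  have key2 : lam * ∑ i, |u i|
      ≤ lam * ∑ i, |zh i| + ρ / 2 * ∑ i, (zh i - u i) ^ 2 + lam ^ 2 / (2 * ρ) * p := by
    have pw : ∀ i : Fin p, lam * |u i|
        ≤ lam * |zh i| + ρ / 2 * (zh i - u i) ^ 2 + lam ^ 2 / (2 * ρ) := by
      intro i
      have h1 : |u i| ≤ |zh i| + |zh i - u i| := by
        have := abs_sub_abs_le_abs_sub (u i) (zh i)
        rw [abs_sub_comm] at this
        linarith
      have h2 : lam * |zh i - u i| - ρ / 2 * (zh i - u i) ^ 2 ≤ lam ^ 2 / (2 * ρ) := by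
        have hs : (zh i - u i) ^ 2 = |zh i - u i| ^ 2 := (sq_abs _).symm
        rw [hs, le_div_iff₀ (by positivity : (0:ℝ) < 2 * ρ)]
        nlinarith [sq_nonneg (ρ * |zh i - u i| - lam)]
      nlinarith [mul_le_mul_of_nonneg_left h1 hlam.le]
    calc lam * ∑ i, |u i| = ∑ i, lam * |u i| := by rw [Finset.mul_sum]
      _ ≤ ∑ i : Fin p, (lam * |zh i| + ρ / 2 * (zh i - u i) ^ 2 + lam ^ 2 / (2 * ρ)) :=
          Finset.sum_le_sum fun i _ => pw i
      _ = lam * ∑ i, |zh i| + ρ / 2 * ∑ i, (zh i - u i) ^ 2 + lam ^ 2 / (2 * ρ) * p := by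
          rw [Finset.sum_add_distrib, Finset.sum_add_distrib, ← Finset.mul_sum,
            ← Finset.mul_sum, Finset.sum_const, Finset.card_univ, Fintype.card_fin,
            nsmul_eq_mul, mul_comm (p:ℝ)]
  -- triangle inequalities on T and Tᶜ
  have tri1 : ∑ i ∈ T, |a i| - ∑ i ∈ T, |v i| ≤ ∑ i ∈ T, |u i| := by
    rw [← Finset.sum_sub_distrib]
    refine Finset.sum_le_sum fun i _ => ?_
    have := abs_add_le (u i) (-(v i))
    rw [huv i] at this ⊢
    simp at this; linarith [this]
  have tri2 : ∑ i ∈ Tᶜ, |v i| - ∑ i ∈ Tᶜ, |a i| ≤ ∑ i ∈ Tᶜ, |u i| := by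
    rw [← Finset.sum_sub_distrib]
    refine Finset.sum_le_sum fun i _ => ?_
    have := abs_add_le (u i) (-(a i))
    rw [huv i] at this ⊢
    simp at this; linarith [this]
  -- splits into T and Tᶜ
  have splitu : ∑ i ∈ T, |u i| + ∑ i ∈ Tᶜ, |u i| = ∑ i, |u i| :=
    Finset.sum_add_sum_compl T _
  have splita : ∑ i ∈ T, |a i| + ∑ i ∈ Tᶜ, |a i| = ∑ i, |a i| :=
    Finset.sum_add_sum_compl T _
  have splitv : ∑ i ∈ T, |v i| + ∑ i ∈ Tᶜ, |v i| = ∑ i, |v i| :=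
    Finset.sum_add_sum_compl T _
  have hAhsq : (0:ℝ) ≤ ∑ i, (Ah i) ^ 2 := Finset.sum_nonneg fun i _ => sq_nonneg _
  -- combine: lam * l1norm u ≤ lam/2 * l1norm v + lam * l1norm a + lam^2 p/(2ρ)
  have hquadnn : (0:ℝ) ≤ ∑ i, (zh i - u i) ^ 2 := Finset.sum_nonneg fun i _ => sq_nonneg _
  have combined : lam * ∑ i, |u i|
      ≤ (∑ i, |v i|) * (lam / 2) + lam * ∑ i, |a i| + lam ^ 2 / (2 * ρ) * p := by
    have dotsum : Ah ⬝ᵥ w = ∑ i, Ah i * w i := rfl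
    have hax : (∑ i, |(Dᵀ *ᵥ x) i|) = ∑ i, |a i| := rfl
    rw [expand] at key
    simp only [hax] at key
    have hz : (∑ x : Fin p, ((0:ℝ) ^ 2)) = 0 := by simp
    rw [hz] at key
    rw [dotsum] at dotbound
    linarith [key2, dotbound, key]
  -- final algebra
  have heq : lam * (lam / ρ * p) = 2 * (lam ^ 2 / (2 * ρ) * p) := by
    field_simp
  have final : lam * (∑ i ∈ Tᶜ, |v i|)
      ≤ lam * (lam / ρ * p + 3 * ∑ i ∈ T, |v i| + 4 * ∑ i ∈ Tᶜ, |a i|) := by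
    have t1 := mul_le_mul_of_nonneg_left tri1 hlam.le
    have t2 := mul_le_mul_of_nonneg_left tri2 hlam.le
    have mu := congrArg (fun t => lam * t) splitu
    have ma := congrArg (fun t => lam * t) splita
    have mv := congrArg (fun t => lam * t) splitv
    linarith [combined, heq, t1, t2, mu, ma, mv]
  have := (mul_le_mul_iff_right₀ hlam).mp final
  rw [l1norm_restr, l1norm_restr, l1norm_restr]
  linarith [this]
end

section
/- Let D ∈ ℝ^{n×p} be a tight frame (DDᵀ = Iₙ), let A ∈ ℝ^{m×n} satisfy the D-RIP adapted to D with constant σ_{2s} < 1, let λ > 0 and c₀ > 0, and let h ∈ ℝⁿ satisfy ‖DᵀAᵀAh‖_∞ ≤ c₀λ. Let T₀ ⊆ {1,…,p} be any set of size s, let T₁ be the set of the s indices of T₀^c on which |Dᵀh| is largest, and T₀₁ = T₀ ∪ T₁. Then ‖Dᵀ_{T₀₁}h‖₂ ≤ ( √(2s)·c₀·λ + √2·s^{−1/2}·σ_{2s}·‖Dᵀ_{T₀^c}h‖₁ ) / (1 − σ_{2s}). -/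
open scoped BigOperators

/-- Number of nonzero entries of a vector ("ℓ₀ norm"). -/
noncomputable def l0norm {k : ℕ} (v : Fin k → ℝ) : ℕ :=
  (Finset.univ.filter (fun i => v i ≠ 0)).card

/-- D-RIP of `A` adapted to `D` with sparsity level `s` and constant `σ`. -/
def DRIP {m n p : ℕ} (A : Matrix (Fin m) (Fin n) ℝ) (D : Matrix (Fin n) (Fin p) ℝ)
    (s : ℕ) (σ : ℝ) : Prop :=
  ∀ w : Fin p → ℝ, l0norm w ≤ s →
    (1 - σ) * (l2norm (D.mulVec w)) ^ 2 ≤ (l2norm (A.mulVec (D.mulVec w))) ^ 2 ∧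
    (l2norm (A.mulVec (D.mulVec w))) ^ 2 ≤ (1 + σ) * (l2norm (D.mulVec w)) ^ 2

open Matrix

section Aux
variable {k : ℕ}

lemma l2norm_nonneg (v : Fin k → ℝ) : 0 ≤ l2norm v := Real.sqrt_nonneg _

lemma l2norm_sq (v : Fin k → ℝ) : l2norm v ^ 2 = ∑ i, v i ^ 2 :=
  Real.sq_sqrt (Finset.sum_nonneg fun i _ => sq_nonneg _)

lemma dot_self_eq (v : Fin k → ℝ) : v ⬝ᵥ v = l2norm v ^ 2 := by
  rw [l2norm_sq]; simp [dotProduct, sq]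

lemma l1norm_nonneg (v : Fin k → ℝ) : 0 ≤ l1norm v :=
  Finset.sum_nonneg fun i _ => abs_nonneg _

lemma cauchy (v w : Fin k → ℝ) : |v ⬝ᵥ w| ≤ l2norm v * l2norm w := by
  have h := Finset.sum_mul_sq_le_sq_mul_sq Finset.univ v w
  have h2 : (v ⬝ᵥ w) ^ 2 ≤ (l2norm v * l2norm w) ^ 2 := by
    rw [mul_pow, l2norm_sq, l2norm_sq]; exact h
  calc |v ⬝ᵥ w| = Real.sqrt ((v ⬝ᵥ w) ^ 2) := (Real.sqrt_sq_eq_abs _).symm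
    _ ≤ Real.sqrt ((l2norm v * l2norm w) ^ 2) := Real.sqrt_le_sqrt h2
    _ = l2norm v * l2norm w := Real.sqrt_sq (mul_nonneg (l2norm_nonneg _) (l2norm_nonneg _))

lemma l0_restr_le (S : Finset (Fin k)) (v : Fin k → ℝ) : l0norm (restr S v) ≤ S.card := by
  apply Finset.card_le_card
  intro i hi
  simp only [Finset.mem_filter, restr] at hi
  by_contra hc
  simp [hc] at hi

lemma l0_add_le (u w : Fin k → ℝ) : l0norm (u + w) ≤ l0norm u + l0norm w := by
  classical
  calc l0norm (u + w) ≤ ((Finset.univ.filter (fun i => u i ≠ 0)) ∪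
        (Finset.univ.filter (fun i => w i ≠ 0))).card := by
        apply Finset.card_le_card
        intro i hi
        simp only [Finset.mem_filter, Finset.mem_union, Finset.mem_univ, true_and,
          Pi.add_apply] at hi ⊢
        by_contra hc
        push_neg at hc
        simp [hc.1, hc.2] at hi
    _ ≤ _ := Finset.card_union_le _ _

lemma l0_neg (w : Fin k → ℝ) : l0norm (-w) = l0norm w := by
  simp [l0norm]

lemma l0_smul_le (c : ℝ) (w : Fin k → ℝ) : l0norm (c • w) ≤ l0norm w := by
  apply Finset.card_le_card
  intro i hi
  simp only [Finset.mem_filter, Finset.mem_univ, true_and, Pi.smul_apply, smul_eq_mul] at hi ⊢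
  intro hc
  simp [hc] at hi

lemma restr_add_compl (S : Finset (Fin k)) (v : Fin k → ℝ) :
    restr S v + restr Sᶜ v = v := by
  funext i
  by_cases hi : i ∈ S <;> simp [restr, hi]

lemma restr_union_disj {S T : Finset (Fin k)} (hd : Disjoint S T) (v : Fin k → ℝ) :
    restr (S ∪ T) v = restr S v + restr T v := by
  funext i
  by_cases hiS : i ∈ S
  · have hiT : i ∉ T := Finset.disjoint_left.mp hd hiS
    simp [restr, hiS, hiT]
  · by_cases hiT : i ∈ T <;> simp [restr, hiS, hiT]

lemma l1_restr_eq (S : Finset (Fin k)) (v : Fin k → ℝ) :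
    l1norm (restr S v) = ∑ i ∈ S, |v i| := by
  rw [l1norm]
  rw [← Finset.sum_filter_add_sum_filter_not Finset.univ (fun i => i ∈ S)]
  have h1 : ∀ i ∈ Finset.univ.filter (fun i => i ∈ S), |restr S v i| = |v i| := by
    intro i hi; simp only [Finset.mem_filter] at hi; simp [restr, hi.2]
  have h2 : ∀ i ∈ Finset.univ.filter (fun i => ¬ i ∈ S), |restr S v i| = 0 := by
    intro i hi; simp only [Finset.mem_filter] at hi; simp [restr, hi.2]
  rw [Finset.sum_congr rfl h1, Finset.sum_congr rfl h2]
  simp [Finset.filter_mem_eq_inter]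

lemma l2sq_restr (S : Finset (Fin k)) (v : Fin k → ℝ) :
    l2norm (restr S v) ^ 2 = ∑ i ∈ S, v i ^ 2 := by
  rw [l2norm_sq]
  rw [← Finset.sum_filter_add_sum_filter_not Finset.univ (fun i => i ∈ S)]
  have h1 : ∀ i ∈ Finset.univ.filter (fun i => i ∈ S), restr S v i ^ 2 = v i ^ 2 := by
    intro i hi; simp only [Finset.mem_filter] at hi; simp [restr, hi.2]
  have h2 : ∀ i ∈ Finset.univ.filter (fun i => ¬ i ∈ S), restr S v i ^ 2 = 0 := by
    intro i hi; simp only [Finset.mem_filter] at hi; simp [restr, hi.2]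
  rw [Finset.sum_congr rfl h1, Finset.sum_congr rfl h2]
  simp [Finset.filter_mem_eq_inter]

lemma restr_dot (S : Finset (Fin k)) (v : Fin k → ℝ) :
    (restr S v) ⬝ᵥ v = l2norm (restr S v) ^ 2 := by
  rw [l2sq_restr, dotProduct]
  have he : ∀ i, restr S v i * v i = if i ∈ S then v i ^ 2 else 0 := by
    intro i; by_cases h : i ∈ S <;> simp [restr, h, sq]
  simp_rw [he]
  rw [Finset.sum_ite_mem, Finset.univ_inter]

end Aux
section Aux2
variable {k : ℕ}

lemma l1_le_sqrt_card (S : Finset (Fin k)) (v : Fin k → ℝ) :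
    l1norm (restr S v) ≤ Real.sqrt S.card * l2norm (restr S v) := by
  rw [l1_restr_eq]
  have h := Finset.sum_mul_sq_le_sq_mul_sq S (fun _ => (1:ℝ)) (fun i => |v i|)
  simp only [one_mul, one_pow, sq_abs] at h
  have h2 : (∑ i ∈ S, |v i|) ^ 2 ≤ (Real.sqrt S.card * l2norm (restr S v)) ^ 2 := by
    rw [mul_pow, Real.sq_sqrt (by positivity), l2sq_restr]
    simpa using h
  calc ∑ i ∈ S, |v i| = Real.sqrt ((∑ i ∈ S, |v i|) ^ 2) := by
        rw [Real.sqrt_sq (Finset.sum_nonneg fun i _ => abs_nonneg _)]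
    _ ≤ Real.sqrt ((Real.sqrt S.card * l2norm (restr S v)) ^ 2) := Real.sqrt_le_sqrt h2
    _ = _ := Real.sqrt_sq (mul_nonneg (Real.sqrt_nonneg _) (l2norm_nonneg _))

lemma l2_restr_le_of_bound {S : Finset (Fin k)} {v : Fin k → ℝ} {t : ℝ}
    (hb : ∀ i ∈ S, |v i| ≤ t) : l2norm (restr S v) ≤ Real.sqrt S.card * t := by
  rcases S.eq_empty_or_nonempty with hSe | ⟨i0, hi0⟩
  · have h1 : restr S v = 0 := by funext i; simp [restr, hSe]
    have : l2norm (0 : Fin k → ℝ) = 0 := by simp [l2norm]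
    rw [h1, this, hSe]
    simp
  have ht : 0 ≤ t := le_trans (abs_nonneg (v i0)) (hb i0 hi0)
  have h2 : l2norm (restr S v) ^ 2 ≤ (Real.sqrt S.card * t) ^ 2 := by
    rw [l2sq_restr, mul_pow, Real.sq_sqrt (by positivity)]
    calc ∑ i ∈ S, v i ^ 2 ≤ ∑ _i ∈ S, t ^ 2 := by
          apply Finset.sum_le_sum; intro i hi
          rw [← sq_abs]; exact pow_le_pow_left₀ (abs_nonneg _) (hb i hi) 2
      _ = S.card * t ^ 2 := by rw [Finset.sum_const, nsmul_eq_mul]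
  calc l2norm (restr S v) = Real.sqrt (l2norm (restr S v) ^ 2) :=
        (Real.sqrt_sq (l2norm_nonneg _)).symm
    _ ≤ Real.sqrt ((Real.sqrt S.card * t) ^ 2) := Real.sqrt_le_sqrt h2
    _ = _ := Real.sqrt_sq (mul_nonneg (Real.sqrt_nonneg _) ht)

lemma abs_le_linf (g : Fin k → ℝ) (i : Fin k) : |g i| ≤ linfnorm g :=
  le_ciSup (f := fun j => |g j|) (Set.Finite.bddAbove (Set.finite_range _)) i

lemma dot_le_l1_linf (v g : Fin k → ℝ) : v ⬝ᵥ g ≤ l1norm v * linfnorm g := by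
  rw [dotProduct, l1norm, Finset.sum_mul]
  apply Finset.sum_le_sum
  intro i _
  calc v i * g i ≤ |v i * g i| := le_abs_self _
    _ = |v i| * |g i| := abs_mul _ _
    _ ≤ |v i| * linfnorm g := mul_le_mul_of_nonneg_left (abs_le_linf g i) (abs_nonneg _)

lemma dot_mulVec_left {a b : ℕ} (M : Matrix (Fin a) (Fin b) ℝ) (u : Fin b → ℝ)
    (w : Fin a → ℝ) : (M.mulVec u) ⬝ᵥ w = u ⬝ᵥ (M.transpose.mulVec w) := by
  rw [Matrix.dotProduct_mulVec, Matrix.vecMul_transpose]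

end Aux2
section Aux3
variable {m n p : ℕ} {A : Matrix (Fin m) (Fin n) ℝ} {D : Matrix (Fin n) (Fin p) ℝ}

lemma frame_mulVec (htf : D * D.transpose = 1) (h : Fin n → ℝ) :
    D.mulVec (D.transpose.mulVec h) = h := by
  rw [Matrix.mulVec_mulVec, htf, Matrix.one_mulVec]

lemma dot_expand {a' : ℕ} (a b : Fin a' → ℝ) :
    (a + b) ⬝ᵥ (a + b) = a ⬝ᵥ a + 2 * (a ⬝ᵥ b) + b ⬝ᵥ b := by
  rw [add_dotProduct, dotProduct_add, dotProduct_add,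
    dotProduct_comm b a]
  ring

lemma dot_expand_sub {a' : ℕ} (a b : Fin a' → ℝ) :
    (a - b) ⬝ᵥ (a - b) = a ⬝ᵥ a - 2 * (a ⬝ᵥ b) + b ⬝ᵥ b := by
  rw [sub_dotProduct, dotProduct_sub, dotProduct_sub,
    dotProduct_comm b a]
  ring

lemma l2_mulVec_le (htf : D * D.transpose = 1) (w : Fin p → ℝ) :
    l2norm (D.mulVec w) ≤ l2norm w := by
  set Pw := D.transpose.mulVec (D.mulVec w) with hPw
  have h1 : (D.mulVec w) ⬝ᵥ (D.mulVec w) = w ⬝ᵥ Pw := dot_mulVec_left D w (D.mulVec w)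
  have h2 : Pw ⬝ᵥ Pw = (D.mulVec w) ⬝ᵥ (D.mulVec w) := by
    rw [hPw, dot_mulVec_left D.transpose (D.mulVec w) (D.transpose.mulVec (D.mulVec w)),
      Matrix.transpose_transpose, frame_mulVec htf]
  have hPl2 : l2norm Pw = l2norm (D.mulVec w) := by
    rw [dot_self_eq, dot_self_eq] at h2
    calc l2norm Pw = Real.sqrt (l2norm Pw ^ 2) := (Real.sqrt_sq (l2norm_nonneg _)).symm
      _ = Real.sqrt (l2norm (D.mulVec w) ^ 2) := by rw [h2]
      _ = _ := Real.sqrt_sq (l2norm_nonneg _)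
  have key : l2norm (D.mulVec w) ^ 2 ≤ l2norm w * l2norm (D.mulVec w) := by
    rw [← dot_self_eq, h1]
    calc w ⬝ᵥ Pw ≤ |w ⬝ᵥ Pw| := le_abs_self _
      _ ≤ l2norm w * l2norm Pw := cauchy w Pw
      _ = l2norm w * l2norm (D.mulVec w) := by rw [hPl2]
  rcases eq_or_lt_of_le (l2norm_nonneg (D.mulVec w)) with h0 | h0
  · rw [← h0]; exact l2norm_nonneg w
  · nlinarith [key, h0]

lemma rip_cross {s2 : ℕ} {σ : ℝ} (hA : DRIP A D s2 σ) (u w : Fin p → ℝ)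
    (hl0 : l0norm u + l0norm w ≤ s2) :
    |(A.mulVec (D.mulVec u)) ⬝ᵥ (A.mulVec (D.mulVec w))
        - (D.mulVec u) ⬝ᵥ (D.mulVec w)|
      ≤ σ / 2 * ((D.mulVec u) ⬝ᵥ (D.mulVec u) + (D.mulVec w) ⬝ᵥ (D.mulVec w)) := by
  obtain ⟨h1p, h2p⟩ := hA (u + w) (le_trans (l0_add_le u w) hl0)
  obtain ⟨h1m, h2m⟩ := hA (u - w) (by
    have h := l0_add_le u (-w)
    rw [l0_neg] at h
    rw [sub_eq_add_neg]
    exact le_trans h hl0)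
  rw [← dot_self_eq, ← dot_self_eq] at h1p h2p h1m h2m
  rw [Matrix.mulVec_add, Matrix.mulVec_add, dot_expand, dot_expand] at h1p h2p
  rw [Matrix.mulVec_sub, Matrix.mulVec_sub, dot_expand_sub, dot_expand_sub] at h1m h2m
  rw [abs_le]
  constructor <;> nlinarith [h1p, h2p, h1m, h2m]

end Aux3
section Aux4
variable {m n p : ℕ} {A : Matrix (Fin m) (Fin n) ℝ} {D : Matrix (Fin n) (Fin p) ℝ}

lemma dot_self_zero {a' : ℕ} {v : Fin a' → ℝ} (h : v ⬝ᵥ v = 0) : v = 0 := by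
  rw [dot_self_eq, l2norm_sq] at h
  funext i
  have h2 := (Finset.sum_eq_zero_iff_of_nonneg (fun i _ => sq_nonneg (v i))).mp h i
    (Finset.mem_univ i)
  exact pow_eq_zero_iff (by norm_num) |>.mp h2

lemma rip_cross_prod {s2 : ℕ} {σ : ℝ} (htf : D * D.transpose = 1)
    (hA : DRIP A D s2 σ) (hσ0 : 0 ≤ σ) (u w : Fin p → ℝ)
    (hl0 : l0norm u + l0norm w ≤ s2) :
    |(A.mulVec (D.mulVec u)) ⬝ᵥ (A.mulVec (D.mulVec w))
        - (D.mulVec u) ⬝ᵥ (D.mulVec w)|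
      ≤ σ * l2norm u * l2norm w := by
  set a := l2norm (D.mulVec u) with ha
  set b := l2norm (D.mulVec w) with hb
  have ha0 : 0 ≤ a := l2norm_nonneg _
  have hb0 : 0 ≤ b := l2norm_nonneg _
  by_cases hza : a = 0
  · have : D.mulVec u = 0 := dot_self_zero (by rw [dot_self_eq, ← ha, hza]; ring)
    rw [this]
    simp only [Matrix.mulVec_zero, zero_dotProduct, sub_zero, abs_zero]
    exact mul_nonneg (mul_nonneg hσ0 (l2norm_nonneg u)) (l2norm_nonneg w)
  by_cases hzb : b = 0
  · have : D.mulVec w = 0 := dot_self_zero (by rw [dot_self_eq, ← hb, hzb]; ring)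
    rw [this]
    simp only [Matrix.mulVec_zero, dotProduct_zero, sub_zero, abs_zero]
    exact mul_nonneg (mul_nonneg hσ0 (l2norm_nonneg u)) (l2norm_nonneg w)
  have hapos : 0 < a := lt_of_le_of_ne ha0 (Ne.symm hza)
  have hbpos : 0 < b := lt_of_le_of_ne hb0 (Ne.symm hzb)
  -- scaled cross bound with α = b, β = a
  have hsc := rip_cross hA (b • u) (a • w) (by
    calc l0norm (b • u) + l0norm (a • w) ≤ l0norm u + l0norm w :=
          add_le_add (l0_smul_le b u) (l0_smul_le a w)
      _ ≤ s2 := hl0)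
  simp only [Matrix.mulVec_smul, smul_dotProduct, dotProduct_smul,
    smul_eq_mul] at hsc
  have hru : (D.mulVec u) ⬝ᵥ (D.mulVec u) = a ^ 2 := dot_self_eq _
  have hrw : (D.mulVec w) ⬝ᵥ (D.mulVec w) = b ^ 2 := dot_self_eq _
  rw [hru, hrw] at hsc
  rw [← mul_sub, ← mul_sub, abs_mul, abs_mul, abs_of_pos hbpos, abs_of_pos hapos] at hsc
  -- hsc : b * (a * |X|) ≤ σ/2 * (b^2 * a^2 + a^2 * b^2)
  have hX : |(A.mulVec (D.mulVec u)) ⬝ᵥ (A.mulVec (D.mulVec w))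
      - (D.mulVec u) ⬝ᵥ (D.mulVec w)| ≤ σ * a * b := by
    have hba : 0 < b * a := mul_pos hbpos hapos
    nlinarith [hsc]
  calc |(A.mulVec (D.mulVec u)) ⬝ᵥ (A.mulVec (D.mulVec w))
      - (D.mulVec u) ⬝ᵥ (D.mulVec w)| ≤ σ * a * b := hX
    _ ≤ σ * l2norm u * l2norm w := by
        have h1 : a ≤ l2norm u := l2_mulVec_le htf u
        have h2 : b ≤ l2norm w := l2_mulVec_le htf w
        exact mul_le_mul (mul_le_mul_of_nonneg_left h1 hσ0) h2 hb0
          (mul_nonneg hσ0 (l2norm_nonneg u))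

end Aux4
section Aux5
variable {p : ℕ}

lemma exists_top (g : Fin p → ℝ) (k : ℕ) :
    ∀ S : Finset (Fin p), ∃ B ⊆ S, B.card = min k S.card ∧
      ∀ i ∈ B, ∀ j ∈ S \ B, g j ≤ g i := by
  induction k with
  | zero =>
    intro S
    exact ⟨∅, Finset.empty_subset S, by simp, by simp⟩
  | succ k ih =>
    intro S
    rcases S.eq_empty_or_nonempty with hS | hS
    · exact ⟨∅, Finset.empty_subset S, by simp [hS], by simp⟩
    obtain ⟨a, haS, hmax⟩ := S.exists_max_image g hS
    obtain ⟨B', hB'sub, hB'card, hB'max⟩ := ih (S.erase a)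
    refine ⟨insert a B', ?_, ?_, ?_⟩
    · intro i hi
      rcases Finset.mem_insert.mp hi with h | h
      · rw [h]; exact haS
      · exact Finset.mem_of_mem_erase (hB'sub h)
    · have hanb : a ∉ B' := fun h => (Finset.mem_erase.mp (hB'sub h)).1 rfl
      rw [Finset.card_insert_of_notMem hanb, hB'card, Finset.card_erase_of_mem haS]
      have hSpos : 1 ≤ S.card := Finset.card_pos.mpr hS
      omega
    · intro i hi j hj
      have hjS : j ∈ S := (Finset.mem_sdiff.mp hj).1
      have hjnB : j ∉ insert a B' := (Finset.mem_sdiff.mp hj).2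
      rcases Finset.mem_insert.mp hi with h | h
      · rw [h]; exact hmax j hjS
      · apply hB'max i h
        rw [Finset.mem_sdiff]
        refine ⟨Finset.mem_erase.mpr ⟨?_, hjS⟩, ?_⟩
        · intro hja; exact hjnB (by rw [hja]; exact Finset.mem_insert_self a B')
        · intro hjB; exact hjnB (Finset.mem_insert_of_mem hjB)

lemma tail_bound (B : (Fin p → ℝ) → ℝ)
    (hadd : ∀ a b, B (a + b) = B a + B b)
    (x : Fin p → ℝ) (C : ℝ) (hC : 0 ≤ C)
    (s : ℕ) (hs : 1 ≤ s) :
    ∀ N : ℕ, ∀ S : Finset (Fin p), S.card ≤ N → ∀ t : ℝ, 0 ≤ t →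
      (∀ i ∈ S, |x i| ≤ t) →
      (∀ T : Finset (Fin p), T ⊆ S → T.card ≤ s → |B (restr T x)| ≤ C * l2norm (restr T x)) →
      |B (restr S x)| ≤ C * (Real.sqrt s * t + (Real.sqrt s)⁻¹ * l1norm (restr S x)) := by
  have hsq : (0:ℝ) < Real.sqrt s := Real.sqrt_pos.mpr (by exact_mod_cast hs)
  intro N
  induction N with
  | zero =>
    intro S hcard t ht hbound hB
    have hSe : S = ∅ := Finset.card_eq_zero.mp (Nat.le_zero.mp hcard)
    have hz : restr S x = 0 := by funext i; simp [restr, hSe]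
    have hB0 : |B (restr S x)| = 0 := by
      have := hadd 0 0
      simp only [add_zero] at this
      have hB00 : B 0 = 0 := by linarith
      rw [hz, hB00, abs_zero]
    rw [hB0]
    have : 0 ≤ l1norm (restr S x) := l1norm_nonneg _
    have h1 : 0 ≤ Real.sqrt s * t := mul_nonneg hsq.le ht
    have h2 : 0 ≤ (Real.sqrt s)⁻¹ * l1norm (restr S x) :=
      mul_nonneg (inv_nonneg.mpr hsq.le) this
    nlinarith
  | succ N ih =>
    intro S hcard t ht hbound hB
    by_cases hsmall : S.card ≤ s
    · -- single block
      have h1 : |B (restr S x)| ≤ C * l2norm (restr S x) := hB S (subset_refl S) hsmall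
      have h2 : l2norm (restr S x) ≤ Real.sqrt S.card * t := l2_restr_le_of_bound hbound
      have h3 : Real.sqrt S.card ≤ Real.sqrt s := Real.sqrt_le_sqrt (by exact_mod_cast hsmall)
      have h4 : 0 ≤ (Real.sqrt s)⁻¹ * l1norm (restr S x) :=
        mul_nonneg (inv_nonneg.mpr hsq.le) (l1norm_nonneg _)
      calc |B (restr S x)| ≤ C * l2norm (restr S x) := h1
        _ ≤ C * (Real.sqrt s * t) := by
            apply mul_le_mul_of_nonneg_left _ hC
            calc l2norm (restr S x) ≤ Real.sqrt S.card * t := h2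
              _ ≤ Real.sqrt s * t := mul_le_mul_of_nonneg_right h3 ht
        _ ≤ C * (Real.sqrt s * t + (Real.sqrt s)⁻¹ * l1norm (restr S x)) := by
            apply mul_le_mul_of_nonneg_left _ hC
            linarith
    · push_neg at hsmall
      obtain ⟨Bk, hBksub, hBkcard, hBkmax⟩ := exists_top (fun i => |x i|) s S
      have hBkcard' : Bk.card = s := by rw [hBkcard]; omega
      have hsplit : restr S x = restr Bk x + restr (S \ Bk) x := by
        rw [← restr_union_disj (Finset.disjoint_sdiff) x, Finset.union_sdiff_of_subset hBksub]
      set t' : ℝ := (∑ j ∈ Bk, |x j|) / s with ht'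
      have ht'0 : 0 ≤ t' := div_nonneg (Finset.sum_nonneg fun j _ => abs_nonneg _)
        (by positivity)
      have hbound' : ∀ i ∈ S \ Bk, |x i| ≤ t' := by
        intro i hi
        have hle : ∀ j ∈ Bk, |x i| ≤ |x j| := fun j hj => hBkmax j hj i hi
        have hsum : (s : ℝ) * |x i| ≤ ∑ j ∈ Bk, |x j| := by
          calc (s : ℝ) * |x i| = ∑ _j ∈ Bk, |x i| := by
                rw [Finset.sum_const, hBkcard', nsmul_eq_mul]
            _ ≤ ∑ j ∈ Bk, |x j| := Finset.sum_le_sum hle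
        rw [ht', le_div_iff₀ (by exact_mod_cast hs : (0:ℝ) < s)]
        linarith
      have hcard' : (S \ Bk).card ≤ N := by
        rw [Finset.card_sdiff_of_subset hBksub, hBkcard']
        omega
      have ihr := ih (S \ Bk) hcard' t' ht'0 hbound'
        (fun T hT hTc => hB T (hT.trans (Finset.sdiff_subset)) hTc)
      have hblk : |B (restr Bk x)| ≤ C * (Real.sqrt s * t) := by
        have h1 : |B (restr Bk x)| ≤ C * l2norm (restr Bk x) :=
          hB Bk hBksub (le_of_eq hBkcard')
        have h2 : l2norm (restr Bk x) ≤ Real.sqrt Bk.card * t :=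
          l2_restr_le_of_bound (fun i hi => hbound i (hBksub hi))
        rw [hBkcard'] at h2
        calc |B (restr Bk x)| ≤ C * l2norm (restr Bk x) := h1
          _ ≤ C * (Real.sqrt s * t) := mul_le_mul_of_nonneg_left h2 hC
      -- √s * t' = (√s)⁻¹ * Σ_{Bk} |x|
      have hst' : Real.sqrt s * t' = (Real.sqrt s)⁻¹ * ∑ j ∈ Bk, |x j| := by
        have hss : (s : ℝ) = Real.sqrt s * Real.sqrt s :=
          (Real.mul_self_sqrt (by positivity)).symm
        have hspos : (0:ℝ) < s := by exact_mod_cast hs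
        have h1 : (Real.sqrt (s:ℝ))⁻¹ = Real.sqrt (s:ℝ) / (s:ℝ) := by
          rw [eq_div_iff hspos.ne']
          calc (Real.sqrt (s:ℝ))⁻¹ * s
              = (Real.sqrt (s:ℝ))⁻¹ * (Real.sqrt s * Real.sqrt s) := by rw [← hss]
            _ = Real.sqrt (s:ℝ) := inv_mul_cancel_left₀ hsq.ne' _
        rw [ht', h1]; ring
      have hl1split : l1norm (restr S x) = (∑ j ∈ Bk, |x j|) + l1norm (restr (S \ Bk) x) := by
        rw [l1_restr_eq, l1_restr_eq, ← Finset.sum_union (Finset.disjoint_sdiff),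
          Finset.union_sdiff_of_subset hBksub]
      have htri : |B (restr S x)| ≤ |B (restr Bk x)| + |B (restr (S \ Bk) x)| := by
        rw [hsplit, hadd]
        exact abs_add_le _ _
      have hfin := ihr
      rw [hst'] at hfin
      calc |B (restr S x)|
          ≤ |B (restr Bk x)| + |B (restr (S \ Bk) x)| := htri
        _ ≤ C * (Real.sqrt s * t) +
            C * ((Real.sqrt s)⁻¹ * (∑ j ∈ Bk, |x j|) +
              (Real.sqrt s)⁻¹ * l1norm (restr (S \ Bk) x)) := by
            apply add_le_add hblk
            calc |B (restr (S \ Bk) x)| ≤ C * (Real.sqrt s * t' +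
                (Real.sqrt s)⁻¹ * l1norm (restr (S \ Bk) x)) := ihr
              _ = _ := by rw [hst']
        _ = C * (Real.sqrt s * t + (Real.sqrt s)⁻¹ * l1norm (restr S x)) := by
            rw [hl1split]
            ring

end Aux5

lemma sqrt_mul_div_eq (s : ℕ) (hs : 1 ≤ s) (c : ℝ) :
    Real.sqrt s * (c / s) = (Real.sqrt s)⁻¹ * c := by
  have hsq : (0:ℝ) < Real.sqrt s := Real.sqrt_pos.mpr (by exact_mod_cast hs)
  have hspos : (0:ℝ) < s := by exact_mod_cast hs
  have hss : (s:ℝ) = Real.sqrt s * Real.sqrt s := (Real.mul_self_sqrt (by positivity)).symm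
  have h1 : (Real.sqrt (s:ℝ))⁻¹ = Real.sqrt (s:ℝ) / (s:ℝ) := by
    rw [eq_div_iff hspos.ne']
    calc (Real.sqrt (s:ℝ))⁻¹ * s = (Real.sqrt (s:ℝ))⁻¹ * (Real.sqrt s * Real.sqrt s) := by
          rw [← hss]
      _ = Real.sqrt (s:ℝ) := inv_mul_cancel_left₀ hsq.ne' _
  rw [h1]; ring

set_option maxHeartbeats 1000000 in

/-- if `‖DᵀAᵀAh‖_∞ ≤ c₀λ`, `D` is a tight frame and `A` satisfies the
D-RIP with `σ_{2s} < 1`, then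
`‖Dᵀ_{T₀₁}h‖₂ ≤ (√(2s)·c₀·λ + √2·s^{−1/2}·σ_{2s}·‖Dᵀ_{T₀^c}h‖₁)/(1 − σ_{2s})`. -/
theorem head_l2_bound
    {m n p s : ℕ} (hs : 1 ≤ s)
    (A : Matrix (Fin m) (Fin n) ℝ) (D : Matrix (Fin n) (Fin p) ℝ)
    (htf : D * D.transpose = 1) (σ : ℝ) (hσ : σ < 1)
    (hA : DRIP A D (2 * s) σ)
    (lam c₀ : ℝ) (hlam : 0 < lam) (hc₀ : 0 < c₀)
    (h : Fin n → ℝ)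
    (hopt : linfnorm (D.transpose.mulVec (A.transpose.mulVec (A.mulVec h))) ≤ c₀ * lam)
    (T0 T1 : Finset (Fin p))
    (hT0card : T0.card = s)
    (hT1sub : T1 ⊆ T0ᶜ)
    (hT1card : T1.card = min s T0ᶜ.card)
    (hT1big : ∀ i ∈ T1, ∀ j ∈ T0ᶜ \ T1,
      |D.transpose.mulVec h j| ≤ |D.transpose.mulVec h i|) :
    l2norm (restr (T0 ∪ T1) (D.transpose.mulVec h))
      ≤ (Real.sqrt (2 * (s : ℝ)) * c₀ * lam
          + Real.sqrt 2 * (Real.sqrt (s : ℝ))⁻¹ * σ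
              * l1norm (restr T0ᶜ (D.transpose.mulVec h)))
        / (1 - σ) := by
  classical
  have hsq : (0:ℝ) < Real.sqrt s := Real.sqrt_pos.mpr (by exact_mod_cast hs)
  have hspos : (0:ℝ) < s := by exact_mod_cast hs
  have h1σ : (0:ℝ) < 1 - σ := by linarith
  set x : Fin p → ℝ := D.transpose.mulVec h with hxdef
  by_cases hD : D = 0
  · have hx0 : x = 0 := by rw [hxdef, hD]; simp
    have hr : restr (T0 ∪ T1) x = 0 := by funext i; simp [restr, hx0]
    have hr2 : restr T0ᶜ x = 0 := by funext i; simp [restr, hx0]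
    rw [hr, hr2]
    have hl2 : l2norm (0 : Fin p → ℝ) = 0 := by simp [l2norm]
    have hl1 : l1norm (0 : Fin p → ℝ) = 0 := by simp [l1norm]
    rw [hl2, hl1, mul_zero, add_zero]
    apply div_nonneg _ h1σ.le
    positivity
  · have hσ0 : 0 ≤ σ := by
      have hex : ∃ i j, D i j ≠ 0 := by
        by_contra hc; push_neg at hc
        exact hD (Matrix.ext fun i j => by simpa using hc i j)
      obtain ⟨i0, j0, hij⟩ := hex
      have hl0w : l0norm (restr {j0} (fun _ => (1:ℝ))) ≤ 2 * s := by
        calc l0norm (restr {j0} (fun _ => (1:ℝ))) ≤ ({j0} : Finset (Fin p)).card :=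
              l0_restr_le _ _
          _ = 1 := Finset.card_singleton _
          _ ≤ 2 * s := by omega
      obtain ⟨h1, h2⟩ := hA (restr {j0} (fun _ => (1:ℝ))) hl0w
      have hmv : D.mulVec (restr {j0} (fun _ => (1:ℝ))) i0 = D i0 j0 := by
        simp [Matrix.mulVec, dotProduct, restr, Finset.mem_singleton, mul_ite,
          mul_one, mul_zero, Finset.sum_ite_eq']
      have hDw : 0 < l2norm (D.mulVec (restr {j0} (fun _ => (1:ℝ)))) ^ 2 := by
        rw [l2norm_sq]
        apply Finset.sum_pos' (fun i _ => sq_nonneg _)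
        exact ⟨i0, Finset.mem_univ i0, by rw [hmv]; positivity⟩
      nlinarith [h1, h2, hDw]
    set T01 := T0 ∪ T1 with hT01def
    set v : Fin p → ℝ := restr T01 x with hvdef
    set v0 : Fin p → ℝ := restr T0 x with hv0def
    set v1 : Fin p → ℝ := restr T1 x with hv1def
    set z : Fin p → ℝ := restr T01ᶜ x with hzdef
    set a : ℝ := l2norm v with hadef
    set L : ℝ := l1norm (restr T0ᶜ x) with hLdef
    have ha0 : 0 ≤ a := l2norm_nonneg v
    have hL0 : 0 ≤ L := l1norm_nonneg _
    have hdisj : Disjoint T0 T1 := by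
      rw [Finset.disjoint_left]
      intro i hi0 hi1
      exact absurd hi0 (Finset.mem_compl.mp (hT1sub hi1))
    have hvsplit : v = v0 + v1 := by rw [hvdef, hT01def, restr_union_disj hdisj]
    have hxsplit : v + z = x := restr_add_compl T01 x
    have hDx : D.mulVec x = h := frame_mulVec htf h
    have hT1le : T1.card ≤ s := by rw [hT1card]; exact min_le_left _ _
    have hT01card : T01.card ≤ 2 * s := by
      calc T01.card ≤ T0.card + T1.card := Finset.card_union_le _ _
        _ ≤ 2 * s := by omega
    have hl0v : l0norm v ≤ 2 * s := le_trans (l0_restr_le _ _) hT01card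
    have hT01compl : T01ᶜ = T0ᶜ \ T1 := by
      ext i
      simp only [hT01def, Finset.mem_compl, Finset.mem_sdiff, Finset.mem_union]
      tauto
    -- linear part
    have hlin : (A.mulVec (D.mulVec v)) ⬝ᵥ (A.mulVec h)
        ≤ Real.sqrt (2*(s:ℝ)) * c₀ * lam * a := by
      have e1 : (A.mulVec (D.mulVec v)) ⬝ᵥ (A.mulVec h)
          = v ⬝ᵥ (D.transpose.mulVec (A.transpose.mulVec (A.mulVec h))) := by
        rw [dot_mulVec_left A (D.mulVec v) (A.mulVec h), dot_mulVec_left D v]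
      rw [e1]
      calc v ⬝ᵥ (D.transpose.mulVec (A.transpose.mulVec (A.mulVec h)))
          ≤ l1norm v * linfnorm (D.transpose.mulVec (A.transpose.mulVec (A.mulVec h))) :=
            dot_le_l1_linf _ _
        _ ≤ l1norm v * (c₀ * lam) := mul_le_mul_of_nonneg_left hopt (l1norm_nonneg v)
        _ ≤ (Real.sqrt (2*(s:ℝ)) * a) * (c₀ * lam) := by
            apply mul_le_mul_of_nonneg_right _ (by positivity)
            calc l1norm v ≤ Real.sqrt T01.card * l2norm v := l1_le_sqrt_card T01 x
              _ ≤ Real.sqrt (2*(s:ℝ)) * a := by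
                  apply mul_le_mul_of_nonneg_right _ ha0
                  apply Real.sqrt_le_sqrt
                  push_cast
                  exact_mod_cast hT01card
        _ = Real.sqrt (2*(s:ℝ)) * c₀ * lam * a := by ring
    -- cross part
    have hcross : ∀ U : Finset (Fin p), U.card ≤ s →
        |(A.mulVec (D.mulVec (restr U x))) ⬝ᵥ (A.mulVec (D.mulVec z))
          - (D.mulVec (restr U x)) ⬝ᵥ (D.mulVec z)|
        ≤ σ * l2norm (restr U x) * ((Real.sqrt (s:ℝ))⁻¹ * L) := by
      intro U hU
      by_cases hTbig : T0ᶜ.card < s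
      · have hT1eq : T1 = T0ᶜ := Finset.eq_of_subset_of_card_le hT1sub (by omega)
        have hT01univ : T01 = Finset.univ := by
          rw [hT01def, hT1eq, Finset.union_compl]
        have hz0 : z = 0 := by
          rw [hzdef, hT01univ]
          funext i
          simp [restr]
        rw [hz0]
        simp only [Matrix.mulVec_zero, dotProduct_zero, sub_zero, abs_zero]
        exact mul_nonneg (mul_nonneg hσ0 (l2norm_nonneg _))
          (mul_nonneg (inv_nonneg.mpr hsq.le) hL0)
      · push_neg at hTbig
        have hT1s : T1.card = s := by rw [hT1card]; omega
        set Bf : (Fin p → ℝ) → ℝ := fun w =>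
          (A.mulVec (D.mulVec (restr U x))) ⬝ᵥ (A.mulVec (D.mulVec w))
            - (D.mulVec (restr U x)) ⬝ᵥ (D.mulVec w) with hBfdef
        have hadd : ∀ c d, Bf (c + d) = Bf c + Bf d := by
          intro c d
          simp only [hBfdef, Matrix.mulVec_add, dotProduct_add]
          ring
        set t : ℝ := (∑ j ∈ T1, |x j|) / s with htdef
        have ht0 : 0 ≤ t :=
          div_nonneg (Finset.sum_nonneg fun j _ => abs_nonneg _) (by positivity)
        have hbound : ∀ i ∈ T01ᶜ, |x i| ≤ t := by
          intro i hi
          rw [hT01compl] at hi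
          have key : ∀ j ∈ T1, |x i| ≤ |x j| := fun j hj => hT1big j hj i hi
          have hsum : (s:ℝ) * |x i| ≤ ∑ j ∈ T1, |x j| := by
            calc (s:ℝ) * |x i| = ∑ _j ∈ T1, |x i| := by
                  rw [Finset.sum_const, hT1s, nsmul_eq_mul]
              _ ≤ ∑ j ∈ T1, |x j| := Finset.sum_le_sum key
          rw [htdef, le_div_iff₀ hspos]
          linarith
        have hBle : ∀ T : Finset (Fin p), T ⊆ T01ᶜ → T.card ≤ s →
            |Bf (restr T x)| ≤ (σ * l2norm (restr U x)) * l2norm (restr T x) := by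
          intro T hTsub hTc
          have hrc := rip_cross_prod htf hA hσ0 (restr U x) (restr T x) (by
            have h1 := l0_restr_le U x
            have h2 := l0_restr_le T x
            omega)
          exact hrc
        have htail := tail_bound Bf hadd x (σ * l2norm (restr U x))
          (mul_nonneg hσ0 (l2norm_nonneg _)) s hs (T01ᶜ.card) T01ᶜ le_rfl t ht0 hbound hBle
        have hstt : Real.sqrt (s:ℝ) * t = (Real.sqrt (s:ℝ))⁻¹ * ∑ j ∈ T1, |x j| := by
          rw [htdef]
          exact sqrt_mul_div_eq s hs _
        have hLsplit : L = (∑ j ∈ T1, |x j|) + l1norm (restr T01ᶜ x) := by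
          rw [hLdef, l1_restr_eq, l1_restr_eq, hT01compl,
            ← Finset.sum_sdiff hT1sub]
          ring
        have hfin : Real.sqrt (s:ℝ) * t + (Real.sqrt (s:ℝ))⁻¹ * l1norm (restr T01ᶜ x)
            = (Real.sqrt (s:ℝ))⁻¹ * L := by
          rw [hstt, hLsplit]
          ring
        calc |(A.mulVec (D.mulVec (restr U x))) ⬝ᵥ (A.mulVec (D.mulVec z))
              - (D.mulVec (restr U x)) ⬝ᵥ (D.mulVec z)|
            = |Bf (restr T01ᶜ x)| := by rw [hzdef]
          _ ≤ (σ * l2norm (restr U x)) * (Real.sqrt (s:ℝ) * t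
                + (Real.sqrt (s:ℝ))⁻¹ * l1norm (restr T01ᶜ x)) := htail
          _ = σ * l2norm (restr U x) * ((Real.sqrt (s:ℝ))⁻¹ * L) := by rw [hfin]
    have hc0' := hcross T0 (le_of_eq hT0card)
    have hc1' := hcross T1 hT1le
    -- l2 v0 + l2 v1 ≤ √2 a
    have hsq2 : a^2 = l2norm v0 ^ 2 + l2norm v1 ^ 2 := by
      rw [hadef, hvdef, l2sq_restr, hT01def, Finset.sum_union hdisj,
        hv0def, hv1def, l2sq_restr, l2sq_restr]
    have hl2sum : l2norm v0 + l2norm v1 ≤ Real.sqrt 2 * a := by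
      have hX0 : 0 ≤ l2norm v0 + l2norm v1 :=
        add_nonneg (l2norm_nonneg _) (l2norm_nonneg _)
      calc l2norm v0 + l2norm v1 = Real.sqrt ((l2norm v0 + l2norm v1)^2) :=
            (Real.sqrt_sq hX0).symm
        _ ≤ Real.sqrt (2 * a^2) := by
            apply Real.sqrt_le_sqrt
            nlinarith [sq_nonneg (l2norm v0 - l2norm v1)]
        _ = Real.sqrt 2 * a := by
            rw [Real.sqrt_mul (by norm_num), Real.sqrt_sq ha0]
    -- combined cross bound
    have hcv : (A.mulVec (D.mulVec v)) ⬝ᵥ (A.mulVec (D.mulVec z))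
        - (D.mulVec v) ⬝ᵥ (D.mulVec z)
        ≥ -(σ * Real.sqrt 2 * a * ((Real.sqrt (s:ℝ))⁻¹ * L)) := by
      have e : A.mulVec (D.mulVec v) = A.mulVec (D.mulVec v0) + A.mulVec (D.mulVec v1) := by
        rw [hvsplit, Matrix.mulVec_add, Matrix.mulVec_add]
      have e2 : D.mulVec v = D.mulVec v0 + D.mulVec v1 := by
        rw [hvsplit, Matrix.mulVec_add]
      rw [e, e2, add_dotProduct, add_dotProduct]
      have b0 := (abs_le.mp hc0').1
      have b1 := (abs_le.mp hc1').1
      have hnn : 0 ≤ σ * ((Real.sqrt (s:ℝ))⁻¹ * L) :=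
        mul_nonneg hσ0 (mul_nonneg (inv_nonneg.mpr hsq.le) hL0)
      nlinarith [b0, b1, hl2sum, hnn]
    -- energy identities
    have hDvh : (D.mulVec v) ⬝ᵥ h = a ^ 2 := by
      rw [dot_mulVec_left D v h]
      exact restr_dot T01 x
    have hDsum : D.mulVec v + D.mulVec z = h := by
      rw [← Matrix.mulVec_add, hxsplit, hDx]
    have hdvz : (D.mulVec v) ⬝ᵥ (D.mulVec z) = a^2 - l2norm (D.mulVec v)^2 := by
      have hDz : D.mulVec z = h - D.mulVec v := by
        rw [eq_sub_iff_add_eq, add_comm]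
        exact hDsum
      rw [hDz, dotProduct_sub, hDvh, dot_self_eq]
    have hAh : A.mulVec h = A.mulVec (D.mulVec v) + A.mulVec (D.mulVec z) := by
      rw [← Matrix.mulVec_add, hDsum]
    have hqv : (A.mulVec (D.mulVec v)) ⬝ᵥ (A.mulVec (D.mulVec v))
        = (A.mulVec (D.mulVec v)) ⬝ᵥ (A.mulVec h)
          - (A.mulVec (D.mulVec v)) ⬝ᵥ (A.mulVec (D.mulVec z)) := by
      rw [hAh, dotProduct_add]
      ring
    have hripv := (hA v hl0v).1
    have hq_eq : l2norm (A.mulVec (D.mulVec v))^2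
        = (A.mulVec (D.mulVec v)) ⬝ᵥ (A.mulVec (D.mulVec v)) := (dot_self_eq _).symm
    have hrv_le : l2norm (D.mulVec v)^2 ≤ a^2 := by
      have h1 := l2_mulVec_le htf v
      have h2 := l2norm_nonneg (D.mulVec v)
      nlinarith
    set K : ℝ := Real.sqrt (2*(s:ℝ)) * c₀ * lam
      + Real.sqrt 2 * (Real.sqrt (s:ℝ))⁻¹ * σ * L with hKdef
    have hKa_eq : K * a = Real.sqrt (2*(s:ℝ)) * c₀ * lam * a
        + σ * Real.sqrt 2 * a * ((Real.sqrt (s:ℝ))⁻¹ * L) := by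
      rw [hKdef]; ring
    have hσrv : σ * l2norm (D.mulVec v)^2 ≤ σ * a^2 :=
      mul_le_mul_of_nonneg_left hrv_le hσ0
    have hKa : (1 - σ) * a^2 ≤ K * a := by
      rw [hKa_eq]
      linarith [hripv, hq_eq, hqv, hlin, hcv, hdvz, hσrv]
    have hKnonneg : 0 ≤ K := by
      rw [hKdef]
      have h1 : 0 ≤ Real.sqrt (2*(s:ℝ)) * c₀ * lam := by positivity
      have h2 : 0 ≤ Real.sqrt 2 * (Real.sqrt (s:ℝ))⁻¹ * σ * L := by
        apply mul_nonneg _ hL0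
        apply mul_nonneg _ hσ0
        positivity
      linarith
    rcases eq_or_lt_of_le ha0 with h0 | h0
    · rw [← h0]
      exact div_nonneg hKnonneg h1σ.le
    · rw [le_div_iff₀ h1σ]
      have hKa' : ((1-σ)*a)*a ≤ K*a := by
        calc ((1-σ)*a)*a = (1-σ)*a^2 := by ring
          _ ≤ K*a := hKa
      have := (mul_le_mul_iff_of_pos_right h0).mp hKa'
      linarith
end
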